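/- Let G be a group, λ a nonempty set, h : G → G a group automorphism, φ : λ → λ a bijection, and u : λ → G any map. Then the map σ on the Brandt semigroup B_λ(G) defined by σ(α, g, β) = (φ(α), u(α)·h(g)·(u(β))⁻¹, φ(β)) and σ(0) = 0 is an automorphism of B_λ(G). -/

import Mathlib

/-- The Brandt semigroup `B_Λ(G)` over a group `G`: its underlying set is
`(Λ × G × Λ) ∪ {0}`, where `none` plays the role of the zero `0`. -/
def BrandtG (Λ G : Type*) : Type _ :=
  Option (Λ × G × Λ)

namespace BrandtG

variable {Λ G : Type*}

instance : Zero (BrandtG Λ G) := ⟨none⟩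

open Classical in
/-- `(α, a, β)·(γ, b, δ) = (α, ab, δ)` if `β = γ`, and `0` otherwise;
`0` is a two-sided zero. -/
noncomputable instance [Mul G] : Mul (BrandtG Λ G) :=
  ⟨fun x y =>
    match x, y with
    | some (α, a, β), some (γ, b, δ) =>
        if β = γ then some (α, a * b, δ) else 0
    | _, _ => 0⟩

end BrandtG

/-- An automorphism of a semigroup: a bijective map preserving the multiplication. -/
def IsSemigroupAut {T : Type*} [Mul T] (σ : T → T) : Prop :=
  Function.Bijective σ ∧ ∀ x y : T, σ (x * y) = σ x * σ y

/-!
On nonzero elements `σ` acts through an explicit bijection of `Λ × G × Λ`, so it is bijective.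
It is multiplicative because in `σ(α, a, β) · σ(β, b, δ)` the inner factors `(u β)⁻¹ · u β` cancel,
while `β ≠ γ` forces `φ β ≠ φ γ`, so zero products stay zero.
-/

namespace BrandtG

variable {Λ Λ' G H : Type*}

def of (α : Λ) (a : G) (β : Λ) : BrandtG Λ G := some (α, a, β)

protected lemma zero_mul [Mul G] (x : BrandtG Λ G) : 0 * x = 0 := by
  cases x <;> rfl

protected lemma mul_zero [Mul G] (x : BrandtG Λ G) : x * 0 = 0 := by
  cases x <;> rfl

lemma of_mul_of_self [Mul G] (α β δ : Λ) (a b : G) :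
    of α a β * of β b δ = (of α (a * b) δ : BrandtG Λ G) :=
  if_pos rfl

lemma of_mul_of_of_ne [Mul G] {β γ : Λ} (α δ : Λ) (a b : G) (hβγ : β ≠ γ) :
    (of α a β * of γ b δ : BrandtG Λ G) = 0 :=
  if_neg hβγ

section Twist

variable [Group G] [Group H] (h : G ≃* H) (φ : Λ ≃ Λ') (u : Λ → H)

def twistCoords : Λ × G × Λ ≃ Λ' × H × Λ' where
  toFun x := (φ x.1, u x.1 * h x.2.1 * (u x.2.2)⁻¹, φ x.2.2)
  invFun y :=
    (φ.symm y.1, h.symm ((u (φ.symm y.1))⁻¹ * y.2.1 * u (φ.symm y.2.2)), φ.symm y.2.2)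
  left_inv x := by simp [mul_assoc]
  right_inv y := by simp [mul_assoc]

def twist : BrandtG Λ G ≃ BrandtG Λ' H :=
  (twistCoords h φ u).optionCongr

lemma twist_zero : twist h φ u 0 = 0 := rfl

lemma twist_of (α β : Λ) (g : G) :
    twist h φ u (of α g β) = of (φ α) (u α * h g * (u β)⁻¹) (φ β) := rfl

lemma twist_mul (x y : BrandtG Λ G) : twist h φ u (x * y) = twist h φ u x * twist h φ u y := by
  rcases x with _ | ⟨α, a, β⟩
  · exact (BrandtG.zero_mul _).symm
  rcases y with _ | ⟨γ, b, δ⟩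
  · exact (BrandtG.mul_zero _).symm
  change twist h φ u (of α a β * of γ b δ) = twist h φ u (of α a β) * twist h φ u (of γ b δ)
  rw [twist_of, twist_of]
  obtain rfl | hβγ := eq_or_ne β γ
  · rw [of_mul_of_self, of_mul_of_self, twist_of, map_mul]
    simp only [mul_assoc, inv_mul_cancel_left]
  · rw [of_mul_of_of_ne _ _ _ _ hβγ, of_mul_of_of_ne _ _ _ _ (φ.injective.ne hβγ),
      twist_zero]

end Twist

end BrandtG

theorem stmt_2_general {Λ G : Type*} [Group G]
    (h : G ≃* G) (φ : Λ ≃ Λ) (u : Λ → G)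
    (σ : BrandtG Λ G → BrandtG Λ G)
    (hσ : ∀ (α β : Λ) (g : G),
      σ (some (α, g, β)) = some (φ α, u α * h g * (u β)⁻¹, φ β))
    (hσ0 : σ 0 = 0) :
    IsSemigroupAut σ := by
  obtain rfl : σ = BrandtG.twist h φ u := by
    funext x
    rcases x with _ | ⟨α, g, β⟩
    exacts [hσ0, hσ α β g]
  exact ⟨(BrandtG.twist h φ u).bijective, BrandtG.twist_mul h φ u⟩

/-- Let `G` be a group, `Λ` a nonempty set, `h : G → G` a group automorphism,
`φ : Λ → Λ` a bijection, and `u : Λ → G` any map. Then the map `σ` on the Brandt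
semigroup `B_Λ(G)` defined by `σ(α, g, β) = (φ(α), u(α)·h(g)·(u(β))⁻¹, φ(β))` and
`σ(0) = 0` is an automorphism of `B_Λ(G)`. -/
theorem stmt_2 {Λ G : Type*} [Nonempty Λ] [Group G]
    (h : G ≃* G) (φ : Λ ≃ Λ) (u : Λ → G)
    (σ : BrandtG Λ G → BrandtG Λ G)
    (hσ : ∀ (α β : Λ) (g : G),
      σ (some (α, g, β)) = some (φ α, u α * h g * (u β)⁻¹, φ β))
    (hσ0 : σ 0 = 0) :
    IsSemigroupAut σ :=
  stmt_2_general h φ u σ hσ hσ0
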